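/- arXiv:0707.1256 — 2 statements merged into one kernel-verified Lean document; each statement's English description precedes it below -/
import Mathlib

section
/- For every M > 0 and ε > 0 there exists δ > 0 such that for all continuous q₁, q₂ : [0,2π] → ℝ with sup|q₁| ≤ M, sup|q₂| ≤ M and ∫₀^{2π} |q₁(t) − q₂(t)| dt ≤ δ, one has ‖Φ_{q₁}(2π) − Φ_{q₂}(2π)‖ ≤ ε. (The matrix-level monodromy map is uniformly continuous with respect to the L¹ norm on sup-norm-bounded sets of potentials.) -/
open Real Set Matrix

attribute [local instance] Matrix.normedAddCommGroup Matrix.normedSpace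

/-!
The difference `D = Φ₁ - Φ₂` solves `D' = A₁ D + (A₁ - A₂) Φ₂` with `Aᵢ = hillMatrix (qᵢ t)`,
so `‖D'‖ ≤ K ‖D‖ + 2 C |q₁ - q₂|` with `K = 2 (1 + M)`, where `C = exp (2π K)` bounds `‖Φ₂‖` by
the classical Grönwall inequality. A Grönwall inequality with a time-dependent forcing term then
gives `‖D (2π)‖ ≤ 2 C² ∫ |q₁ - q₂|`.
-/

open Filter Topology

theorem Matrix.norm_mul_le_card_mul {l m n α : Type*} [Fintype l] [Fintype m] [Fintype n]
    [NormedRing α] (A : Matrix l m α) (B : Matrix m n α) :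
    ‖A * B‖ ≤ Fintype.card m * ‖A‖ * ‖B‖ := by
  refine (Matrix.norm_le_iff (by positivity)).2 fun i j => ?_
  calc ‖(A * B) i j‖ ≤ ∑ k, ‖A i k‖ * ‖B k j‖ :=
        (norm_sum_le _ _).trans (Finset.sum_le_sum fun k _ => norm_mul_le _ _)
    _ ≤ ∑ _k : m, ‖A‖ * ‖B‖ := by
        gcongr <;> exact Matrix.norm_entry_le_entrywise_sup_norm _
    _ = Fintype.card m * ‖A‖ * ‖B‖ := by
        rw [Finset.sum_const, Finset.card_univ, nsmul_eq_mul, mul_assoc]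

section Gronwall

variable {E : Type*} [NormedAddCommGroup E] [NormedSpace ℝ E]

theorem norm_le_exp_mul_of_norm_deriv_right_le_of_continuous {f f' : ℝ → E} {p : ℝ → ℝ}
    {K a b : ℝ} (hK : 0 ≤ K) (hf : ContinuousOn f (Icc a b))
    (hf' : ∀ x ∈ Ico a b, HasDerivWithinAt f (f' x) (Ici x) x)
    (hp : Continuous p) (hp_nonneg : ∀ x ∈ Ico a b, 0 ≤ p x)
    (bound : ∀ x ∈ Ico a b, ‖f' x‖ ≤ K * ‖f x‖ + p x) :
    ∀ x ∈ Icc a b, ‖f x‖ ≤ exp (K * (x - a)) * (‖f a‖ + ∫ t in a..x, p t) := by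
  set B : ℝ → ℝ → ℝ := fun η t => exp (K * (t - a)) * (‖f a‖ + η * (t - a) + ∫ s in a..t, p s)
  -- For `η > 0`, `B η` is a strict upper fence for `‖f‖`.
  have fence : ∀ η > 0, ∀ x ∈ Icc a b, ‖f x‖ ≤ B η x := by
    intro η hη
    have hB : ∀ t, HasDerivAt (B η) (K * B η t + exp (K * (t - a)) * (η + p t)) t := by
      intro t
      have hexp := (((hasDerivAt_id t).sub_const a).const_mul K).exp
      have hlin := (((hasDerivAt_id t).sub_const a).const_mul η).const_add ‖f a‖
      refine (hexp.mul (hlin.add (hp.integral_hasStrictDerivAt a t).hasDerivAt)).congr_deriv ?_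
      simp only [B, id, Pi.add_apply]
      ring
    refine image_norm_le_of_norm_deriv_right_lt_deriv_boundary hf hf' (by simp [B]) hB ?_
    intro x hx hfx
    have hexp : 1 ≤ exp (K * (x - a)) := one_le_exp (mul_nonneg hK (sub_nonneg.2 hx.1))
    calc ‖f' x‖ ≤ K * B η x + p x := hfx ▸ bound x hx
      _ < K * B η x + exp (K * (x - a)) * (η + p x) := by
        nlinarith [hp_nonneg x hx]
  intro x hx
  have hlim : Tendsto (fun η => B η x) (𝓝[>] 0) (𝓝 (B 0 x)) :=
    ((Continuous.tendsto (by fun_prop) 0).mono_left nhdsWithin_le_nhds)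
  simpa [B] using ge_of_tendsto hlim (eventually_nhdsWithin_of_forall fun η hη => fence η hη x hx)

theorem norm_le_exp_mul_of_norm_deriv_right_le {f f' : ℝ → E} {p : ℝ → ℝ}
    {K a b : ℝ} (hK : 0 ≤ K) (hf : ContinuousOn f (Icc a b))
    (hf' : ∀ x ∈ Ico a b, HasDerivWithinAt f (f' x) (Ici x) x)
    (hp : ContinuousOn p (Icc a b)) (hp_nonneg : ∀ x ∈ Ico a b, 0 ≤ p x)
    (bound : ∀ x ∈ Ico a b, ‖f' x‖ ≤ K * ‖f x‖ + p x) :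
    ∀ x ∈ Icc a b, ‖f x‖ ≤ exp (K * (x - a)) * (‖f a‖ + ∫ t in a..x, p t) := by
  intro x hx
  have hab : a ≤ b := hx.1.trans hx.2
  obtain ⟨p', hp'c, hp'p⟩ : ∃ p' : ℝ → ℝ, Continuous p' ∧ EqOn p' p (Icc a b) :=
    ⟨IccExtend hab ((Icc a b).domRestrict p), continuous_IccExtend_iff.2 hp.domRestrict,
      fun t ht => IccExtend_of_mem hab _ ht⟩
  have key := norm_le_exp_mul_of_norm_deriv_right_le_of_continuous hK hf hf' hp'c
    (fun t ht => by rw [hp'p (Ico_subset_Icc_self ht)]; exact hp_nonneg t ht)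
    (fun t ht => by rw [hp'p (Ico_subset_Icc_self ht)]; exact bound t ht) x hx
  rwa [intervalIntegral.integral_congr (g := p) fun t ht => hp'p ?_] at key
  rw [uIcc_of_le hx.1] at ht
  exact Icc_subset_Icc_right hx.2 ht

end Gronwall

def hillMatrix (q : ℝ) : Matrix (Fin 2) (Fin 2) ℝ := !![0, 1; q, 0]

theorem norm_hillMatrix_le (q : ℝ) : ‖hillMatrix q‖ ≤ 1 + |q| := by
  refine (Matrix.norm_le_iff (by positivity)).2 fun i j => ?_
  fin_cases i <;> fin_cases j <;> simp [hillMatrix] <;> positivity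

theorem norm_hillMatrix_sub_le (q₁ q₂ : ℝ) : ‖hillMatrix q₁ - hillMatrix q₂‖ ≤ |q₁ - q₂| := by
  refine (Matrix.norm_le_iff (abs_nonneg _)).2 fun i j => ?_
  fin_cases i <;> fin_cases j <;> simp [hillMatrix]

theorem norm_hillMatrix_mul_le {q M : ℝ} (hq : |q| ≤ M) (X : Matrix (Fin 2) (Fin 2) ℝ) :
    ‖hillMatrix q * X‖ ≤ 2 * (1 + M) * ‖X‖ :=
  calc ‖hillMatrix q * X‖ ≤ 2 * ‖hillMatrix q‖ * ‖X‖ := by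
        simpa using Matrix.norm_mul_le_card_mul (hillMatrix q) X
    _ ≤ 2 * (1 + M) * ‖X‖ := by gcongr; exact (norm_hillMatrix_le q).trans (by linarith)

theorem hasDerivWithinAt_matrix_iff {m n : Type*} [Fintype m] [Fintype n]
    {Φ : ℝ → Matrix m n ℝ} {Φ' : Matrix m n ℝ} {s : Set ℝ} {t : ℝ} :
    HasDerivWithinAt Φ Φ' s t ↔ ∀ i j, HasDerivWithinAt (fun s => Φ s i j) (Φ' i j) s t :=
  hasDerivWithinAt_pi.trans (forall_congr' fun _ => hasDerivWithinAt_pi)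

section Hill

variable {q q₁ q₂ : ℝ → ℝ} {Φ Φ₁ Φ₂ : ℝ → Matrix (Fin 2) (Fin 2) ℝ} {M C a b : ℝ}

theorem norm_le_mul_exp_of_hasDerivWithinAt_hillMatrix (hq : ∀ t ∈ Icc a b, |q t| ≤ M)
    (hΦ : ∀ t ∈ Icc a b, HasDerivWithinAt Φ (hillMatrix (q t) * Φ t) (Icc a b) t) :
    ∀ t ∈ Icc a b, ‖Φ t‖ ≤ ‖Φ a‖ * exp (2 * (1 + M) * (t - a)) := by
  have := norm_le_gronwallBound_of_norm_deriv_right_le (ε := 0) (δ := ‖Φ a‖) (K := 2 * (1 + M))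
    (fun t ht => (hΦ t ht).continuousWithinAt)
    (fun t ht => (hΦ t (Ico_subset_Icc_self ht)).mono_of_mem_nhdsWithin (Icc_mem_nhdsGE_of_mem ht))
    le_rfl (fun t ht => by simpa using norm_hillMatrix_mul_le (hq t (Ico_subset_Icc_self ht)) _)
  simpa only [gronwallBound_ε0] using this

theorem norm_sub_le_of_hasDerivWithinAt_hillMatrix (hM : 0 ≤ M)
    (hq₁c : ContinuousOn q₁ (Icc a b)) (hq₂c : ContinuousOn q₂ (Icc a b))
    (hq₁ : ∀ t ∈ Icc a b, |q₁ t| ≤ M) (hΦ₂C : ∀ t ∈ Icc a b, ‖Φ₂ t‖ ≤ C)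
    (hΦ₁ : ∀ t ∈ Icc a b, HasDerivWithinAt Φ₁ (hillMatrix (q₁ t) * Φ₁ t) (Icc a b) t)
    (hΦ₂ : ∀ t ∈ Icc a b, HasDerivWithinAt Φ₂ (hillMatrix (q₂ t) * Φ₂ t) (Icc a b) t) :
    ∀ t ∈ Icc a b, ‖Φ₁ t - Φ₂ t‖ ≤
      exp (2 * (1 + M) * (t - a)) * (‖Φ₁ a - Φ₂ a‖ + ∫ s in a..t, 2 * C * |q₁ s - q₂ s|) := by
  have hΦ : ∀ t ∈ Icc a b, HasDerivWithinAt (fun s => Φ₁ s - Φ₂ s)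
      (hillMatrix (q₁ t) * Φ₁ t - hillMatrix (q₂ t) * Φ₂ t) (Icc a b) t :=
    fun t ht => (hΦ₁ t ht).sub (hΦ₂ t ht)
  refine norm_le_exp_mul_of_norm_deriv_right_le (by positivity)
    (fun t ht => (hΦ t ht).continuousWithinAt)
    (fun t ht => (hΦ t (Ico_subset_Icc_self ht)).mono_of_mem_nhdsWithin (Icc_mem_nhdsGE_of_mem ht))
    (continuousOn_const.mul (hq₁c.sub hq₂c).abs) ?_ ?_
  · intro t ht
    have := (norm_nonneg _).trans (hΦ₂C t (Ico_subset_Icc_self ht))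
    positivity
  · intro t ht
    have ht' := Ico_subset_Icc_self ht
    have hsplit : hillMatrix (q₁ t) * Φ₁ t - hillMatrix (q₂ t) * Φ₂ t
        = hillMatrix (q₁ t) * (Φ₁ t - Φ₂ t) + (hillMatrix (q₁ t) - hillMatrix (q₂ t)) * Φ₂ t := by
      rw [Matrix.mul_sub, Matrix.sub_mul]; abel
    have hforce : ‖(hillMatrix (q₁ t) - hillMatrix (q₂ t)) * Φ₂ t‖ ≤ 2 * C * |q₁ t - q₂ t| :=
      calc _ ≤ 2 * ‖hillMatrix (q₁ t) - hillMatrix (q₂ t)‖ * ‖Φ₂ t‖ := by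
            simpa using Matrix.norm_mul_le_card_mul (hillMatrix (q₁ t) - hillMatrix (q₂ t)) (Φ₂ t)
        _ ≤ 2 * |q₁ t - q₂ t| * C := by gcongr; exacts [norm_hillMatrix_sub_le _ _, hΦ₂C t ht']
        _ = 2 * C * |q₁ t - q₂ t| := by ring
    rw [hsplit]
    exact (norm_add_le _ _).trans (add_le_add (norm_hillMatrix_mul_le (hq₁ t ht') _) hforce)

end Hill

/-- Proposition 2.1, last claim. The matrix-level monodromy is
uniformly continuous, with respect to the `L¹` norm, on sup-norm-bounded sets of
potentials on `[0,2π]`. -/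
theorem stmt_5 (M : ℝ) (hM : 0 < M) (ε : ℝ) (hε : 0 < ε) :
    ∃ δ : ℝ, 0 < δ ∧
      ∀ q₁ q₂ : ℝ → ℝ,
        ContinuousOn q₁ (Icc 0 (2 * π)) → ContinuousOn q₂ (Icc 0 (2 * π)) →
        (∀ t ∈ Icc (0:ℝ) (2 * π), |q₁ t| ≤ M) →
        (∀ t ∈ Icc (0:ℝ) (2 * π), |q₂ t| ≤ M) →
        (∫ t in (0:ℝ)..(2 * π), |q₁ t - q₂ t|) ≤ δ →
        -- `Φ₁`, `Φ₂` the fundamental matrices of `q₁`, `q₂` on `[0,2π]`: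
        ∀ Φ₁ Φ₂ : ℝ → Matrix (Fin 2) (Fin 2) ℝ,
          Φ₁ 0 = 1 →
          (∀ t ∈ Icc (0:ℝ) (2 * π), ∀ i j, HasDerivWithinAt (fun s => Φ₁ s i j)
            ((!![0, 1; q₁ t, 0] * Φ₁ t) i j) (Icc 0 (2 * π)) t) →
          Φ₂ 0 = 1 →
          (∀ t ∈ Icc (0:ℝ) (2 * π), ∀ i j, HasDerivWithinAt (fun s => Φ₂ s i j)
            ((!![0, 1; q₂ t, 0] * Φ₂ t) i j) (Icc 0 (2 * π)) t) →
          ‖Φ₁ (2 * π) - Φ₂ (2 * π)‖ ≤ ε := by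
  set C := exp (2 * (1 + M) * (2 * π)) with hC
  refine ⟨ε / (2 * C ^ 2), by positivity, ?_⟩
  intro q₁ q₂ hq₁c hq₂c hq₁ hq₂ hL1 Φ₁ Φ₂ hΦ₁0 hΦ₁ hΦ₂0 hΦ₂
  have hΦ₁' := fun t ht => hasDerivWithinAt_matrix_iff.2 (hΦ₁ t ht)
  have hΦ₂' := fun t ht => hasDerivWithinAt_matrix_iff.2 (hΦ₂ t ht)
  have hone : ‖(1 : Matrix (Fin 2) (Fin 2) ℝ)‖ = 1 := by
    rw [← Matrix.diagonal_one, Matrix.norm_diagonal]; simp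
  have hΦ₂C : ∀ t ∈ Icc 0 (2 * π), ‖Φ₂ t‖ ≤ C := fun t ht => by
    refine (norm_le_mul_exp_of_hasDerivWithinAt_hillMatrix hq₂ hΦ₂' t ht).trans ?_
    rw [hΦ₂0, hone, one_mul, sub_zero, hC]
    gcongr; exact ht.2
  have hdiff := norm_sub_le_of_hasDerivWithinAt_hillMatrix hM.le hq₁c hq₂c hq₁ hΦ₂C hΦ₁' hΦ₂'
    (2 * π) (right_mem_Icc.2 (by positivity))
  rw [hΦ₁0, hΦ₂0, sub_self, norm_zero, zero_add, sub_zero, intervalIntegral.integral_const_mul,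
    ← hC] at hdiff
  calc ‖Φ₁ (2 * π) - Φ₂ (2 * π)‖ ≤ C * (2 * C * (ε / (2 * C ^ 2))) := hdiff.trans (by gcongr)
    _ = ε := by field_simp [show C ≠ 0 from (exp_pos _).ne']
end

section
/- Let Y be a separable real Banach space and ι : Y → C([0,2π],ℝ) an injective continuous linear map with dense range. Let f : ℝ → ℝ be smooth with f' nowhere flat, and let u ∈ Y be such that ι(u) is a nonconstant function. Then the linear map Y → M₂(ℝ) sending v to Φ(2π)·∫₀^{2π} f''((ι u)(t))·(ι v)(t)·Φ(t)⁻¹·N₀·Φ(t) dt, where Φ = Φ_{f'∘ι u}, has range equal to {Φ(2π)·M : M ∈ M₂(ℝ), tr M = 0}; that is, the restricted nonlinear monodromy map is a submersion at u. -/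
/-!
Write `g = f'' ∘ ι u`, `K = Φ⁻¹ N₀ Φ` and `L v = ∫ g (ι v) K`, so that the map in question is
`v ↦ Φ(2π) L v`. Liouville's formula gives `det Φ = 1`, hence `K = [[-ab, -b²], [a², ab]]` where
`(a, b)` is the first row of `Φ`; in particular `L` takes values in `sl₂ = ker tr`.

If the range of `L` were a proper subspace of `sl₂`, a linear functional `φ` would vanish on it
but not on `sl₂`. By density of the range of `ι`, `g · φ(K) ≡ 0` on `[0, 2π]`. As `f'` is nowhere
flat and `ι u` is not constant, `g ≠ 0` near some interior point, where therefore the quadratic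
form `φ(K) = α a² + β ab + γ b²` vanishes. Differentiating twice with `a'' = q a`, `b'' = q b`, the
form also vanishes on the second row `(a', b')` and on the pair of rows, and since the rows form a
basis, `α = β = γ = 0`: `φ` is a multiple of the trace.
-/

open Real Set Matrix

noncomputable section

/-- A smooth function is nowhere flat if some derivative of order `r' ≤ r` (for a
uniform `r`) is nonzero at every point. -/
def NowhereFlat (g : ℝ → ℝ) : Prop :=
  ∃ r : ℕ, 0 < r ∧ ∀ x : ℝ, ∃ r' : ℕ, 0 < r' ∧ r' ≤ r ∧ iteratedDeriv r' g x ≠ 0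

/-- The matrix `N₀ = [[0,0],[1,0]]`. -/
def N0 : Matrix (Fin 2) (Fin 2) ℝ := !![0, 0; 1, 0]

/-- Clamping map `ℝ → [0, 2π]`; it is the identity on `[0, 2π]`. -/
def clamp (t : ℝ) : Icc (0:ℝ) (2 * π) := Set.projIcc 0 (2 * π) (by positivity) t

open Filter Topology

theorem quadratic_coeffs_eq_zero_of_det_ne_zero {v₀ v₁ w₀ w₁ α β γ : ℝ}
    (hd : v₀ * w₁ - v₁ * w₀ ≠ 0)
    (hv : α * v₀ ^ 2 + β * (v₀ * v₁) + γ * v₁ ^ 2 = 0)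
    (hvw : 2 * α * (v₀ * w₀) + β * (v₀ * w₁ + v₁ * w₀) + 2 * γ * (v₁ * w₁) = 0)
    (hw : α * w₀ ^ 2 + β * (w₀ * w₁) + γ * w₁ ^ 2 = 0) :
    α = 0 ∧ β = 0 ∧ γ = 0 := by
  -- With `P = [[v₀, v₁], [w₀, w₁]]` and `S = [[α, β/2], [β/2, γ]]` the hypotheses say
  -- `P S Pᵀ = 0`; the combinations below compute `adj P (P S Pᵀ) (adj P)ᵀ = (det P)² S`.
  have hd2 : (v₀ * w₁ - v₁ * w₀) ^ 2 ≠ 0 := pow_ne_zero 2 hd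
  refine ⟨?_, ?_, ?_⟩ <;> refine (mul_eq_zero.1 ?_).resolve_right hd2
  · linear_combination w₁ ^ 2 * hv - v₁ * w₁ * hvw + v₁ ^ 2 * hw
  · linear_combination -2 * w₀ * w₁ * hv + (v₀ * w₁ + v₁ * w₀) * hvw - 2 * v₀ * v₁ * hw
  · linear_combination w₀ ^ 2 * hv - v₀ * w₀ * hvw + v₀ ^ 2 * hw

theorem quadratic_coeffs_eq_zero_of_wronskian_ne_zero {y₁ y₂ z₁ z₂ : ℝ → ℝ}
    {t₀ q α β γ : ℝ}
    (hy₁ : ∀ᶠ t in 𝓝 t₀, HasDerivAt y₁ (z₁ t) t) (hy₂ : ∀ᶠ t in 𝓝 t₀, HasDerivAt y₂ (z₂ t) t)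
    (hz₁ : HasDerivAt z₁ (q * y₁ t₀) t₀) (hz₂ : HasDerivAt z₂ (q * y₂ t₀) t₀)
    (hW : y₁ t₀ * z₂ t₀ - y₂ t₀ * z₁ t₀ ≠ 0)
    (hQ : ∀ᶠ t in 𝓝 t₀, α * y₁ t ^ 2 + β * (y₁ t * y₂ t) + γ * y₂ t ^ 2 = 0) :
    α = 0 ∧ β = 0 ∧ γ = 0 := by
  -- `Q₁` is the derivative of the form along `(y₁, y₂)`; its derivative at `t₀` is
  -- `2 (α z₁² + β z₁ z₂ + γ z₂²) + 2 q (α y₁² + β y₁ y₂ + γ y₂²)`.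
  set Q₁ : ℝ → ℝ := fun t =>
    2 * α * (y₁ t * z₁ t) + β * (y₁ t * z₂ t + y₂ t * z₁ t) + 2 * γ * (y₂ t * z₂ t)
  have hQ₁ : ∀ᶠ t in 𝓝 t₀, Q₁ t = 0 := by
    filter_upwards [hy₁.eventually_nhds, hy₂.eventually_nhds, hQ.eventually_nhds]
      with t h₁ h₂ h
    have hderiv := (((h₁.self_of_nhds.pow 2).const_mul α).add
      ((h₁.self_of_nhds.mul h₂.self_of_nhds).const_mul β)).add
      ((h₂.self_of_nhds.pow 2).const_mul γ)
    have hzero : HasDerivAt (fun t => α * y₁ t ^ 2 + β * (y₁ t * y₂ t) + γ * y₂ t ^ 2) 0 t :=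
      (hasDerivAt_const t (0 : ℝ)).congr_of_eventuallyEq h
    have := hderiv.unique hzero
    simp only [Q₁]
    linear_combination this
  have hderiv₁ := (((hy₁.self_of_nhds.mul hz₁).const_mul (2 * α)).add
      (((hy₁.self_of_nhds.mul hz₂).add (hy₂.self_of_nhds.mul hz₁)).const_mul β)).add
      ((hy₂.self_of_nhds.mul hz₂).const_mul (2 * γ))
  have hzero₁ : HasDerivAt Q₁ 0 t₀ := (hasDerivAt_const t₀ (0 : ℝ)).congr_of_eventuallyEq hQ₁
  have h₂ := hderiv₁.unique hzero₁
  refine quadratic_coeffs_eq_zero_of_det_ne_zero hW hQ.self_of_nhds hQ₁.self_of_nhds ?_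
  linear_combination h₂ / 2 - q * hQ.self_of_nhds

theorem NowhereFlat.not_deriv_eventuallyEq_zero {g : ℝ → ℝ} (hg : NowhereFlat g) (x : ℝ) :
    ¬ deriv g =ᶠ[𝓝 x] 0 := by
  intro hzero
  obtain ⟨_, -, hr⟩ := hg
  obtain ⟨r', hr', -, hne⟩ := hr x
  obtain ⟨k, rfl⟩ := Nat.exists_eq_add_of_lt hr'
  rw [zero_add, iteratedDeriv_succ', hzero.iteratedDeriv_eq k] at hne
  simp at hne

theorem NowhereFlat.exists_deriv_comp_ne_zero {X : Type*} [TopologicalSpace X]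
    [PreconnectedSpace X] {g : ℝ → ℝ} (hg : NowhereFlat g) {φ : X → ℝ} (hφ : Continuous φ)
    (hnc : ¬ ∃ c, ∀ x, φ x = c) : ∃ x, deriv g (φ x) ≠ 0 := by
  obtain ⟨a, b, hab⟩ : ∃ a b, φ a < φ b := by
    simp only [not_exists, not_forall, ← ne_eq] at hnc
    obtain ⟨x, -⟩ := hnc 0
    obtain ⟨y, hy⟩ := hnc (φ x)
    rcases hy.lt_or_gt with h | h
    exacts [⟨y, x, h⟩, ⟨x, y, h⟩]
  by_contra! hzero
  refine hg.not_deriv_eventuallyEq_zero ((φ a + φ b) / 2) ?_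
  filter_upwards [Ioo_mem_nhds (by linarith : φ a < (φ a + φ b) / 2)
    (by linarith : (φ a + φ b) / 2 < φ b)] with y hy
  obtain ⟨x, rfl⟩ := intermediate_value_univ a b hφ (Ioo_subset_Icc_self hy)
  exact hzero x

theorem exists_mem_Ioo_ne_zero_of_continuousAt {h : ℝ → ℝ} {a b s : ℝ} (hab : a < b)
    (hs : s ∈ Icc a b) (hh : ContinuousAt h s) (hne : h s ≠ 0) : ∃ t ∈ Ioo a b, h t ≠ 0 := by
  rw [← closure_Ioo hab.ne, mem_closure_iff_nhds] at hs
  obtain ⟨t, hne, ht⟩ := hs _ (hh.eventually_ne hne)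
  exact ⟨t, ht, hne⟩

theorem eq_zero_of_forall_intervalIntegral_mul_eq_zero {Y : Type*} {a b : ℝ} (hab : a < b)
    {ι : Y → C(Icc a b, ℝ)} (hdense : DenseRange ι) {h : ℝ → ℝ} (hh : ContinuousOn h (Icc a b))
    (hz : ∀ v, ∫ t in a..b, h t * ι v (projIcc a b hab.le t) = 0) {t : ℝ} (ht : t ∈ Icc a b) :
    h t = 0 := by
  set p : ℝ → Icc a b := projIcc a b hab.le
  set hr : C(Icc a b, ℝ) := ⟨(Icc a b).domRestrict h, hh.domRestrict⟩
  have hp : ∀ s ∈ uIcc a b, hr (p s) = h s := fun s hs => by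
    change h (projIcc a b hab.le s) = h s
    rw [projIcc_of_mem _ (uIcc_of_le hab.le ▸ hs)]
  set Λ : C(Icc a b, ℝ) → ℝ := fun w => ∫ s in a..b, hr (p s) * w (p s)
  have hΛ : Continuous Λ :=
    intervalIntegral.continuous_parametric_intervalIntegral_of_continuous' (by fun_prop) a b
  have hΛι : Λ ∘ ι = fun _ => 0 := funext fun v => by
    rw [Function.comp_apply, ← hz v]
    exact intervalIntegral.integral_congr fun s hs => by simp only [hp s hs]
  have hΛr : ∫ s in a..b, hr (p s) * hr (p s) = 0 :=
    congrFun (hdense.equalizer hΛ continuous_const hΛι) hr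
  by_contra hne
  refine (intervalIntegral.integral_pos hab (by fun_prop) (fun s _ => mul_self_nonneg _)
    ⟨t, ht, ?_⟩).ne' hΛr
  rw [hp t (uIcc_of_le hab.le ▸ ht)]
  exact mul_self_pos.2 hne

theorem Matrix.linearMap_apply_eq_sum {R M m n : Type*} [CommSemiring R] [AddCommMonoid M]
    [Module R M] [Fintype m] [Fintype n] [DecidableEq m] [DecidableEq n]
    (φ : Matrix m n R →ₗ[R] M) (A : Matrix m n R) :
    φ A = ∑ i, ∑ j, A i j • φ (Matrix.single i j 1) := by
  conv_lhs => rw [Matrix.matrix_eq_sum_single A]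
  simp only [map_sum]
  refine Finset.sum_congr rfl fun i _ => Finset.sum_congr rfl fun j _ => ?_
  rw [← map_smul, Matrix.smul_single, smul_eq_mul, mul_one]

theorem Matrix.dual_apply_of_intervalIntegral {m n : Type*} [Fintype m] [Fintype n] [DecidableEq m]
    [DecidableEq n] (φ : Module.Dual ℝ (Matrix m n ℝ)) {F : ℝ → Matrix m n ℝ} {a b : ℝ}
    (hF : ∀ i j, IntervalIntegrable (fun t => F t i j) MeasureTheory.volume a b) :
    φ (of fun i j => ∫ t in a..b, F t i j) = ∫ t in a..b, φ (F t) := by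
  have hφ : ∀ A : Matrix m n ℝ, φ A = ∑ p : m × n, A p.1 p.2 * φ (single p.1 p.2 1) := fun A => by
    rw [Matrix.linearMap_apply_eq_sum φ, ← Fintype.sum_prod_type']
    rfl
  rw [hφ, intervalIntegral.integral_congr fun t _ => hφ (F t),
    intervalIntegral.integral_finsetSum fun p _ => (hF p.1 p.2).mul_const _]
  simp only [of_apply, intervalIntegral.integral_mul_const]

section WeightedIntegral

variable {Y m n : Type*} [AddCommGroup Y] [Module ℝ Y] {a b : ℝ}
  (hab : a ≤ b) (ι : Y →ₗ[ℝ] C(Icc a b, ℝ)) {c : ℝ → ℝ} {K : ℝ → Matrix m n ℝ}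

theorem intervalIntegrable_mul_apply_mul (hc : ContinuousOn c (Icc a b))
    (hK : ContinuousOn K (Icc a b)) (w : C(Icc a b, ℝ)) (i : m) (j : n) :
    IntervalIntegrable (fun t => c t * w (projIcc a b hab t) * K t i j)
      MeasureTheory.volume a b := by
  apply ContinuousOn.intervalIntegrable
  rw [uIcc_of_le hab]
  fun_prop

def weightedMatrixIntegral (hc : ContinuousOn c (Icc a b)) (hK : ContinuousOn K (Icc a b)) :
    Y →ₗ[ℝ] Matrix m n ℝ where
  toFun v := of fun i j => ∫ t in a..b, c t * ι v (projIcc a b hab t) * K t i j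
  map_add' v w := by
    ext i j
    simp only [of_apply, Matrix.add_apply, map_add, ContinuousMap.add_apply, add_mul, mul_add]
    exact intervalIntegral.integral_add (intervalIntegrable_mul_apply_mul hab hc hK _ i j)
      (intervalIntegrable_mul_apply_mul hab hc hK _ i j)
  map_smul' r v := by
    ext i j
    simp only [of_apply, Matrix.smul_apply, map_smul, ContinuousMap.smul_apply, smul_eq_mul,
      RingHom.id_apply, ← intervalIntegral.integral_const_mul]
    exact intervalIntegral.integral_congr fun t _ => by ring

@[simp]
theorem weightedMatrixIntegral_apply (hc : ContinuousOn c (Icc a b))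
    (hK : ContinuousOn K (Icc a b)) (v : Y) :
    weightedMatrixIntegral hab ι hc hK v =
      of fun i j => ∫ t in a..b, c t * ι v (projIcc a b hab t) * K t i j :=
  rfl

theorem dual_weightedMatrixIntegral [Fintype m] [Fintype n] [DecidableEq m] [DecidableEq n]
    (hc : ContinuousOn c (Icc a b)) (hK : ContinuousOn K (Icc a b))
    (φ : Module.Dual ℝ (Matrix m n ℝ)) (v : Y) :
    φ (weightedMatrixIntegral hab ι hc hK v) =
      ∫ t in a..b, c t * ι v (projIcc a b hab t) * φ (K t) := by
  rw [weightedMatrixIntegral_apply,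
    Matrix.dual_apply_of_intervalIntegral φ (intervalIntegrable_mul_apply_mul hab hc hK (ι v))]
  exact intervalIntegral.integral_congr fun t _ => φ.map_smul _ (K t)

end WeightedIntegral

theorem inv_mul_N0_mul_of_det_eq_one {P : Matrix (Fin 2) (Fin 2) ℝ} (hP : P.det = 1) :
    P⁻¹ * N0 * P = !![-(P 0 0 * P 0 1), -(P 0 1 ^ 2); P 0 0 ^ 2, P 0 0 * P 0 1] := by
  obtain ⟨a, b, c, d, rfl⟩ : ∃ a b c d, P = !![a, b; c, d] := ⟨_, _, _, _, P.eta_fin_two⟩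
  rw [Matrix.inv_def, hP, Ring.inverse_one, one_smul, Matrix.adjugate_fin_two_of, N0]
  simp only [Matrix.mul_fin_two, of_apply, cons_val', cons_val_zero, cons_val_one, cons_val_fin_one]
  ring_nf

namespace Hill

-- The columns of `Φ` are `(y, y')` for solutions `y` of Hill's equation `y'' = q y`.
variable {T : ℝ} {q : ℝ → ℝ} {Φ : ℝ → Matrix (Fin 2) (Fin 2) ℝ}
  (hΦ : ∀ t ∈ Icc (0:ℝ) T, ∀ i j, HasDerivWithinAt (fun s => Φ s i j)
    ((!![0, 1; q t, 0] * Φ t) i j) (Icc 0 T) t)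
include hΦ

theorem hasDerivWithinAt_row_zero {t : ℝ} (ht : t ∈ Icc 0 T) (j : Fin 2) :
    HasDerivWithinAt (fun s => Φ s 0 j) (Φ t 1 j) (Icc 0 T) t := by
  simpa [Matrix.mul_apply, Fin.sum_univ_two] using hΦ t ht 0 j

theorem hasDerivWithinAt_row_one {t : ℝ} (ht : t ∈ Icc 0 T) (j : Fin 2) :
    HasDerivWithinAt (fun s => Φ s 1 j) (q t * Φ t 0 j) (Icc 0 T) t := by
  simpa [Matrix.mul_apply, Fin.sum_univ_two] using hΦ t ht 1 j

theorem det_eq_one (hΦ0 : Φ 0 = 1) {t : ℝ} (ht : t ∈ Icc 0 T) : (Φ t).det = 1 := by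
  have hderiv : ∀ s ∈ Icc 0 T, HasDerivWithinAt (fun s => (Φ s).det) 0 (Icc 0 T) s := by
    intro s hs
    simp only [Matrix.det_fin_two]
    exact (((hasDerivWithinAt_row_zero hΦ hs 0).mul (hasDerivWithinAt_row_one hΦ hs 1)).sub
      ((hasDerivWithinAt_row_zero hΦ hs 1).mul (hasDerivWithinAt_row_one hΦ hs 0))).congr_deriv
      (by ring)
  have := (convex_Icc 0 T).norm_image_sub_le_of_norm_hasDerivWithin_le hderiv
    (C := 0) (fun _ _ => by simp) (left_mem_Icc.2 (ht.1.trans ht.2)) ht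
  rw [zero_mul, norm_le_zero_iff, sub_eq_zero, hΦ0, Matrix.det_one] at this
  exact this

theorem continuousOn_inv_mul_N0_mul (hΦ0 : Φ 0 = 1) :
    ContinuousOn (fun t => (Φ t)⁻¹ * N0 * Φ t) (Icc 0 T) := by
  have hrow : ∀ j, ContinuousOn (fun t => Φ t 0 j) (Icc 0 T) := fun j t ht =>
    (hasDerivWithinAt_row_zero hΦ ht j).continuousWithinAt
  refine ContinuousOn.congr (f := fun t => !![-(Φ t 0 0 * Φ t 0 1), -(Φ t 0 1 ^ 2);
    Φ t 0 0 ^ 2, Φ t 0 0 * Φ t 0 1]) ?_ fun t ht =>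
      inv_mul_N0_mul_of_det_eq_one (det_eq_one hΦ hΦ0 ht)
  have h₀ := hrow 0
  have h₁ := hrow 1
  refine continuousOn_pi.2 fun i => continuousOn_pi.2 fun j => ?_
  fin_cases i <;> fin_cases j <;>
    simp only [Fin.zero_eta, Fin.mk_one, of_apply, cons_val', cons_val_zero, cons_val_one,
      cons_val_fin_one] <;> fun_prop

theorem dual_apply_eq_zero_of_trace_eq_zero (hΦ0 : Φ 0 = 1) {t₀ : ℝ} (ht₀ : t₀ ∈ Ioo 0 T)
    (φ : Module.Dual ℝ (Matrix (Fin 2) (Fin 2) ℝ))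
    (hφ : ∀ᶠ t in 𝓝 t₀, φ ((Φ t)⁻¹ * N0 * Φ t) = 0) {X : Matrix (Fin 2) (Fin 2) ℝ}
    (hX : X.trace = 0) : φ X = 0 := by
  have hIcc : ∀ᶠ t in 𝓝 t₀, Icc 0 T ∈ 𝓝 t :=
    (isOpen_Ioo.eventually_mem ht₀).mono fun t ht => Icc_mem_nhds ht.1 ht.2
  have hrow₀ : ∀ j, ∀ᶠ t in 𝓝 t₀, HasDerivAt (fun s => Φ s 0 j) (Φ t 1 j) t := fun j =>
    hIcc.mono fun t ht => (hasDerivWithinAt_row_zero hΦ (mem_of_mem_nhds ht) j).hasDerivAt ht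
  have hrow₁ : ∀ j, HasDerivAt (fun s => Φ s 1 j) (q t₀ * Φ t₀ 0 j) t₀ := fun j =>
    (hasDerivWithinAt_row_one hΦ (Ioo_subset_Icc_self ht₀) j).hasDerivAt hIcc.self_of_nhds
  have hφA : ∀ A : Matrix (Fin 2) (Fin 2) ℝ, φ A = A 0 0 * φ (single 0 0 1) +
      A 0 1 * φ (single 0 1 1) + (A 1 0 * φ (single 1 0 1) + A 1 1 * φ (single 1 1 1)) := by
    intro A
    simp [Matrix.linearMap_apply_eq_sum φ A, Fin.sum_univ_two]
  have hQ : ∀ᶠ t in 𝓝 t₀, φ (single 1 0 1) * Φ t 0 0 ^ 2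
      + (φ (single 1 1 1) - φ (single 0 0 1)) * (Φ t 0 0 * Φ t 0 1)
      + -φ (single 0 1 1) * Φ t 0 1 ^ 2 = 0 := by
    filter_upwards [hφ, hIcc] with t ht htT
    rw [inv_mul_N0_mul_of_det_eq_one (det_eq_one hΦ hΦ0 (mem_of_mem_nhds htT)), hφA] at ht
    simp only [of_apply, cons_val', cons_val_zero, cons_val_one, empty_val', cons_val_fin_one] at ht
    linear_combination ht
  have hW : Φ t₀ 0 0 * Φ t₀ 1 1 - Φ t₀ 0 1 * Φ t₀ 1 0 ≠ 0 := by
    rw [← Matrix.det_fin_two, det_eq_one hΦ hΦ0 (Ioo_subset_Icc_self ht₀)]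
    exact one_ne_zero
  obtain ⟨h10, h11, h01⟩ := quadratic_coeffs_eq_zero_of_wronskian_ne_zero (hrow₀ 0) (hrow₀ 1)
    (hrow₁ 0) (hrow₁ 1) hW hQ
  rw [Matrix.trace_fin_two] at hX
  rw [hφA, h10, neg_eq_zero.1 h01]
  linear_combination X 1 1 * h11 + φ (single 0 0 1) * hX

section Range

variable {Y : Type*} [AddCommGroup Y] [Module ℝ Y] (hΦ0 : Φ 0 = 1) (ι : Y →ₗ[ℝ] C(Icc 0 T, ℝ))
  {c : ℝ → ℝ} (hc : ContinuousOn c (Icc 0 T))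
include hΦ0

theorem range_weightedMatrixIntegral_le_ker_trace (hT : 0 ≤ T) :
    LinearMap.range (weightedMatrixIntegral hT ι hc (continuousOn_inv_mul_N0_mul hΦ hΦ0)) ≤
      LinearMap.ker (Matrix.traceLinearMap (Fin 2) ℝ ℝ) := by
  rintro _ ⟨v, rfl⟩
  rw [LinearMap.mem_ker, dual_weightedMatrixIntegral]
  refine (intervalIntegral.integral_congr fun t ht => ?_).trans intervalIntegral.integral_zero
  rw [uIcc_of_le hT] at ht
  simp [inv_mul_N0_mul_of_det_eq_one (det_eq_one hΦ hΦ0 ht), Matrix.trace_fin_two]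

theorem ker_trace_le_range_weightedMatrixIntegral (hT : 0 < T) (hdense : DenseRange ι)
    {t₀ : ℝ} (ht₀ : t₀ ∈ Ioo 0 T) (hct₀ : c t₀ ≠ 0) :
    LinearMap.ker (Matrix.traceLinearMap (Fin 2) ℝ ℝ) ≤
      LinearMap.range (weightedMatrixIntegral hT.le ι hc (continuousOn_inv_mul_N0_mul hΦ hΦ0)) := by
  intro X hX
  by_contra hXL
  obtain ⟨φ, hφX, hφL⟩ := (LinearMap.range _).exists_dual_map_eq_bot_of_notMem hXL inferInstance
  have hφ : ∀ v, ∫ t in (0:ℝ)..T, c t * φ ((Φ t)⁻¹ * N0 * Φ t) * ι v (projIcc 0 T hT.le t) = 0 :=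
    fun v => by
      have := LinearMap.mem_ker.1 (LinearMap.le_ker_iff_map.2 hφL ⟨v, rfl⟩)
      rw [dual_weightedMatrixIntegral] at this
      exact (intervalIntegral.integral_congr fun t _ => by ring).trans this
  have hcφ : ∀ t ∈ Icc 0 T, c t * φ ((Φ t)⁻¹ * N0 * Φ t) = 0 := fun t ht =>
    eq_zero_of_forall_intervalIntegral_mul_eq_zero hT hdense
      (hc.mul ((LinearMap.continuous_of_finiteDimensional φ).comp_continuousOn
        (continuousOn_inv_mul_N0_mul hΦ hΦ0))) hφ ht
  refine hφX (dual_apply_eq_zero_of_trace_eq_zero hΦ hΦ0 ht₀ φ ?_ hX)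
  have hIcc : Icc 0 T ∈ 𝓝 t₀ := Icc_mem_nhds ht₀.1 ht₀.2
  filter_upwards [(hc.continuousAt hIcc).eventually_ne hct₀, hIcc] with t hne ht
  exact (mul_eq_zero.1 (hcφ t ht)).resolve_left hne

end Range

end Hill

theorem stmt_10_general (Y : Type*) [NormedAddCommGroup Y] [NormedSpace ℝ Y]
    (ι : Y →L[ℝ] C(Icc (0:ℝ) (2 * π), ℝ))
    (hdense : DenseRange ι)
    (f : ℝ → ℝ) (hf : ContDiff ℝ (⊤ : ℕ∞) f) (hnf : NowhereFlat (deriv f))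
    (u : Y) (huc : ¬ ∃ c : ℝ, ∀ s : Icc (0:ℝ) (2 * π), ι u s = c)
    -- `Φ` the fundamental matrix of the potential `f' ∘ ι u` on `[0,2π]`:
    (Φ : ℝ → Matrix (Fin 2) (Fin 2) ℝ)
    (hΦ0 : Φ 0 = 1)
    (hΦ : ∀ t ∈ Icc (0:ℝ) (2 * π), ∀ i j, HasDerivWithinAt (fun s => Φ s i j)
      ((!![0, 1; deriv f (ι u (clamp t)), 0] * Φ t) i j) (Icc 0 (2 * π)) t) :
    Set.range (fun v : Y => Φ (2 * π) *
        Matrix.of (fun i j : Fin 2 =>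
          ∫ t in (0:ℝ)..(2 * π),
            deriv (deriv f) (ι u (clamp t)) * (ι v (clamp t)) *
              (((Φ t)⁻¹ * N0 * Φ t) i j))) =
      {X : Matrix (Fin 2) (Fin 2) ℝ |
        ∃ M : Matrix (Fin 2) (Fin 2) ℝ, M.trace = 0 ∧ X = Φ (2 * π) * M} := by
  have hT : (0 : ℝ) < 2 * π := by positivity
  have hg : Continuous fun t => deriv (deriv f) (ι u (clamp t)) :=
    (hf.iterate_deriv 2).continuous.comp ((ι u).continuous.comp (continuous_projIcc (h := hT.le)))
  have := Subtype.preconnectedSpace (isPreconnected_Icc (a := (0:ℝ)) (b := 2 * π))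
  obtain ⟨s, hs⟩ := hnf.exists_deriv_comp_ne_zero (ι u).continuous huc
  obtain ⟨t₀, ht₀, hgt₀⟩ := exists_mem_Ioo_ne_zero_of_continuousAt hT s.2 hg.continuousAt
    (by simpa [clamp, projIcc_val] using hs)
  have hL : ∀ M, M ∈ LinearMap.range (weightedMatrixIntegral hT.le (ι : Y →ₗ[ℝ] _)
      hg.continuousOn (Hill.continuousOn_inv_mul_N0_mul hΦ hΦ0)) ↔ M.trace = 0 := fun M => by
    rw [le_antisymm (Hill.range_weightedMatrixIntegral_le_ker_trace hΦ hΦ0 _ _ hT.le)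
      (Hill.ker_trace_le_range_weightedMatrixIntegral hΦ hΦ0 _ _ hT hdense ht₀ hgt₀)]
    rfl
  ext X
  constructor
  · rintro ⟨v, rfl⟩
    exact ⟨_, (hL _).1 ⟨v, rfl⟩, rfl⟩
  · rintro ⟨M, hM, rfl⟩
    obtain ⟨v, rfl⟩ := (hL M).2 hM
    exact ⟨v, rfl⟩

/-- Corollary 3.3. Let `Y` be a separable Banach space, densely and
continuously injected in `C([0,2π],ℝ)` by `ι`, `f` smooth with nowhere flat `f'`, and
`ι u` nonconstant. Then the derivative of the restricted nonlinear monodromy at `u`,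
`v ↦ Φ(2π)·∫₀^{2π} f''((ιu)(t))·(ιv)(t)·Φ(t)⁻¹·N₀·Φ(t) dt`, has range exactly
`{Φ(2π)·M : tr M = 0}`. -/
theorem stmt_10 (Y : Type*) [NormedAddCommGroup Y] [NormedSpace ℝ Y] [CompleteSpace Y]
    [TopologicalSpace.SeparableSpace Y]
    (ι : Y →L[ℝ] C(Icc (0:ℝ) (2 * π), ℝ))
    (hinj : Function.Injective ι) (hdense : DenseRange ι)
    (f : ℝ → ℝ) (hf : ContDiff ℝ (⊤ : ℕ∞) f) (hnf : NowhereFlat (deriv f))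
    (u : Y) (huc : ¬ ∃ c : ℝ, ∀ s : Icc (0:ℝ) (2 * π), ι u s = c)
    -- `Φ` the fundamental matrix of the potential `f' ∘ ι u` on `[0,2π]`:
    (Φ : ℝ → Matrix (Fin 2) (Fin 2) ℝ)
    (hΦ0 : Φ 0 = 1)
    (hΦ : ∀ t ∈ Icc (0:ℝ) (2 * π), ∀ i j, HasDerivWithinAt (fun s => Φ s i j)
      ((!![0, 1; deriv f (ι u (clamp t)), 0] * Φ t) i j) (Icc 0 (2 * π)) t) :
    Set.range (fun v : Y => Φ (2 * π) *
        Matrix.of (fun i j : Fin 2 =>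
          ∫ t in (0:ℝ)..(2 * π),
            deriv (deriv f) (ι u (clamp t)) * (ι v (clamp t)) *
              (((Φ t)⁻¹ * N0 * Φ t) i j))) =
      {X : Matrix (Fin 2) (Fin 2) ℝ |
        ∃ M : Matrix (Fin 2) (Fin 2) ℝ, M.trace = 0 ∧ X = Φ (2 * π) * M} :=
  stmt_10_general Y ι hdense f hf hnf u huc Φ hΦ0 hΦ
end
end
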